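/- For every n ≥ 0, the number of walks of length n on the diagonal square lattice (steps (1,1), (1,−1), (−1,1), (−1,−1)) that start at (0,0) and stay in the quadrant x ≥ 0, y ≥ 0 equals C(n, ⌊n/2⌋)², where C(a,b) denotes the binomial coefficient. -/

import Mathlib

/-!
A diagonal step moves each coordinate by `±1` independently, so a quadrant walk is a pair of
`±1` walks on the half-line `ℕ` (meanders), and the count is the square of the number of
meanders of length `n`. Removing the last step shows that the number `M(n, h)` of meanders
ending at height `≥ h` satisfies `M(n + 1, h) = M(n, h - 1) + M(n, h + 1)` for `h ≥ 0`, with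
`M(n, -1) = M(n, 0)`; this is Pascal's rule for `M(n, h) = C(n, ⌈(n + h) / 2⌉)`.
-/

/-- The number of `n`-step walks on the diagonal square lattice (steps NE, SE, NW, SW)
starting at the origin and confined to the quadrant `x ≥ 0, y ≥ 0`. -/
noncomputable def diagQuadrantCount (n : ℕ) : ℕ :=
  Nat.card {w : Fin (n + 1) → ℤ × ℤ //
    w 0 = (0, 0) ∧
    (∀ k : Fin n, w k.succ - w k.castSucc ∈
      ({(1, 1), (1, -1), (-1, 1), (-1, -1)} : Set (ℤ × ℤ))) ∧
    ∀ k, 0 ≤ (w k).1 ∧ 0 ≤ (w k).2}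

theorem Fin.eq_of_sub_succ_castSucc_eq {G : Type*} [AddGroup G] {n : ℕ}
    {w v : Fin (n + 1) → G} (h₀ : w 0 = v 0)
    (hstep : ∀ k : Fin n, w k.succ - w k.castSucc = v k.succ - v k.castSucc) : w = v :=
  funext fun k => Fin.induction h₀ (fun k ih => by
    rw [← sub_add_cancel (w k.succ) (w k.castSucc), hstep k, ih, sub_add_cancel]) k

def IsNonnegWalk (S : Set ℤ) (n : ℕ) (w : Fin (n + 1) → ℤ) : Prop :=
  w 0 = 0 ∧ (∀ k : Fin n, w k.succ - w k.castSucc ∈ S) ∧ ∀ k, 0 ≤ w k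

namespace IsNonnegWalk

variable {S : Set ℤ} {n : ℕ}

instance [Finite S] : Finite {w // IsNonnegWalk S n w} :=
  Finite.of_injective (fun w k => (⟨w.1 k.succ - w.1 k.castSucc, w.2.2.1 k⟩ : S))
    fun w v hwv => Subtype.ext <| Fin.eq_of_sub_succ_castSucc_eq (w.2.1.trans v.2.1.symm)
      fun k => congrArg Subtype.val (congrFun hwv k)

theorem snoc_iff {v : Fin (n + 1) → ℤ} {x : ℤ} :
    IsNonnegWalk S (n + 1) (Fin.snoc v x) ↔
      IsNonnegWalk S n v ∧ x - v (Fin.last n) ∈ S ∧ 0 ≤ x := by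
  rw [IsNonnegWalk, IsNonnegWalk, ← Fin.castSucc_zero', Fin.snoc_castSucc]
  simp only [Fin.forall_fin_succ', Fin.succ_castSucc, Fin.succ_last,
    Fin.snoc_castSucc, Fin.snoc_last]
  tauto

theorem init {w : Fin (n + 2) → ℤ} (hw : IsNonnegWalk S (n + 1) w) :
    IsNonnegWalk S n (Fin.init w) := by
  rw [← Fin.snoc_init_self w, snoc_iff] at hw
  exact hw.1

theorem last_sub_mem {w : Fin (n + 2) → ℤ} (hw : IsNonnegWalk S (n + 1) w) :
    w (Fin.last (n + 1)) - Fin.init w (Fin.last n) ∈ S := by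
  rw [← Fin.snoc_init_self w, snoc_iff] at hw
  exact hw.2.1

end IsNonnegWalk

def quadrantWalksEquiv (A B : Set ℤ) (n : ℕ) :
    {w : Fin (n + 1) → ℤ × ℤ // w 0 = (0, 0) ∧ (∀ k : Fin n, w k.succ - w k.castSucc ∈ A ×ˢ B) ∧
      ∀ k, 0 ≤ (w k).1 ∧ 0 ≤ (w k).2} ≃
      {w // IsNonnegWalk A n w} × {w // IsNonnegWalk B n w} :=
  (Equiv.subtypeEquiv (Equiv.arrowProdEquivProdArrow _ _ _) fun w => by
    simp only [IsNonnegWalk, Equiv.arrowProdEquivProdArrow_apply, Prod.ext_iff, Set.mem_prod,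
      Prod.fst_sub, Prod.snd_sub, forall_and]
    tauto).trans Equiv.subtypeProdEquivProd

theorem diagonal_steps_eq_prod :
    ({(1, 1), (1, -1), (-1, 1), (-1, -1)} : Set (ℤ × ℤ)) = ({1, -1} : Set ℤ) ×ˢ {1, -1} := by
  ext ⟨a, b⟩
  simp only [Set.mem_insert_iff, Set.mem_singleton_iff, Set.mem_prod, Prod.mk.injEq]
  tauto

abbrev Meander (n : ℕ) := {w // IsNonnegWalk {1, -1} n w}

abbrev MeanderAbove (n : ℕ) (h : ℤ) := {w : Meander n // h ≤ w.1 (Fin.last n)}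

def MeanderAbove.equivOfNonpos {n : ℕ} {h : ℤ} (hh : h ≤ 0) : MeanderAbove n h ≃ Meander n :=
  Equiv.subtypeUnivEquiv fun w => hh.trans (w.2.2.2 _)

def MeanderAbove.succEquiv {n : ℕ} {h : ℤ} (hh : 0 ≤ h) :
    MeanderAbove (n + 1) h ≃ MeanderAbove n (h - 1) ⊕ MeanderAbove n (h + 1) where
  toFun w :=
    if hup : w.1.1 (Fin.last (n + 1)) = Fin.init w.1.1 (Fin.last n) + 1 then
      .inl ⟨⟨Fin.init w.1.1, w.1.2.init⟩, show h - 1 ≤ Fin.init w.1.1 (Fin.last n) by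
        have := w.2; omega⟩
    else
      .inr ⟨⟨Fin.init w.1.1, w.1.2.init⟩, show h + 1 ≤ Fin.init w.1.1 (Fin.last n) by
        have hstep := w.1.2.last_sub_mem
        simp only [Set.mem_insert_iff, Set.mem_singleton_iff] at hstep
        have := w.2; omega⟩
  invFun := Sum.elim
    (fun v => ⟨⟨Fin.snoc v.1.1 (v.1.1 (Fin.last n) + 1), IsNonnegWalk.snoc_iff.2
      ⟨v.1.2, by simp, by have := v.1.2.2.2 (Fin.last n); omega⟩⟩, by simp; have := v.2; omega⟩)
    (fun v => ⟨⟨Fin.snoc v.1.1 (v.1.1 (Fin.last n) - 1), IsNonnegWalk.snoc_iff.2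
      ⟨v.1.2, by simp, by have := v.2; omega⟩⟩, by simp; have := v.2; omega⟩)
  left_inv w := by
    by_cases hup : w.1.1 (Fin.last (n + 1)) = Fin.init w.1.1 (Fin.last n) + 1
    · simp only [hup, dif_pos, Sum.elim_inl]
      ext1; ext1
      dsimp only
      rw [← hup, Fin.snoc_init_self]
    · have hdown : w.1.1 (Fin.last (n + 1)) = Fin.init w.1.1 (Fin.last n) - 1 := by
        have hstep := w.1.2.last_sub_mem
        simp only [Set.mem_insert_iff, Set.mem_singleton_iff] at hstep
        omega
      simp only [hup, dif_neg, not_false_eq_true, Sum.elim_inr]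
      ext1; ext1
      dsimp only
      rw [← hdown, Fin.snoc_init_self]
  right_inv := by
    rintro (v | v)
    · simp
    · simp; omega

instance Meander.instSubsingletonZero : Subsingleton (Meander 0) :=
  ⟨fun w v => Subtype.ext <| Fin.eq_of_sub_succ_castSucc_eq (w.2.1.trans v.2.1.symm)
    fun k => k.elim0⟩

theorem Nat.choose_add_one_div_two (n : ℕ) : n.choose ((n + 1) / 2) = n.choose (n / 2) := by
  rcases Nat.even_or_odd' n with ⟨m, rfl | rfl⟩
  · rw [show (2 * m + 1) / 2 = 2 * m / 2 by omega]
  · rw [show (2 * m + 1 + 1) / 2 = m + 1 by omega, show (2 * m + 1) / 2 = m by omega,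
      Nat.choose_symm_half]

theorem MeanderAbove.card_eq (n h : ℕ) :
    Nat.card (MeanderAbove n h) = n.choose ((n + h + 1) / 2) := by
  induction n generalizing h with
  | zero =>
    cases h with
    | zero =>
      refine Nat.card_eq_one_iff_unique.2 ⟨inferInstance, ⟨⟨⟨0, ?_⟩, le_rfl⟩⟩⟩
      simp [IsNonnegWalk]
    | succ h =>
      have : IsEmpty (MeanderAbove 0 (h + 1 : ℕ)) := ⟨fun w => by
        have hlast := w.2
        have hstart := w.1.2.1
        simp only [Fin.last_zero, hstart] at hlast
        omega⟩
      rw [Nat.card_of_isEmpty, Nat.choose_eq_zero_of_lt (by omega)]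
  | succ n ih =>
    rw [Nat.card_congr (succEquiv (Int.natCast_nonneg h)), Nat.card_sum]
    cases h with
    | zero =>
      have h₀ := ih 0
      have h₁ := ih 1
      rw [Nat.cast_zero] at h₀
      rw [Nat.cast_one] at h₁
      rw [Nat.card_congr (equivOfNonpos (by simp)), ← Nat.card_congr (equivOfNonpos le_rfl),
        Nat.cast_zero, zero_add, h₀, h₁, Nat.add_zero, Nat.choose_add_one_div_two, show (n + 1 + 0 + 1) / 2 = n / 2 + 1 by omega,
        Nat.choose_succ_succ]
    | succ h =>
      rw [show ((h + 1 : ℕ) : ℤ) - 1 = h by push_cast; ring,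
        show ((h + 1 : ℕ) : ℤ) + 1 = (h + 2 : ℕ) by push_cast; ring, ih, ih,
        show (n + 1 + (h + 1) + 1) / 2 = (n + h + 1) / 2 + 1 by omega, Nat.choose_succ_succ]
      congr 2
      omega

theorem Meander.card_eq (n : ℕ) : Nat.card (Meander n) = n.choose (n / 2) := by
  have h₀ := MeanderAbove.card_eq n 0
  rw [Nat.cast_zero] at h₀
  rw [← Nat.card_congr (MeanderAbove.equivOfNonpos le_rfl), h₀, Nat.add_zero,
    Nat.choose_add_one_div_two]

/-- The number of `n`-step quadrant walks on the diagonal square lattice starting at the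
origin is `C(n, ⌊n/2⌋)²`. -/
theorem diagQuadrantCount_eq (n : ℕ) :
    diagQuadrantCount n = Nat.choose n (n / 2) ^ 2 := by
  rw [diagQuadrantCount, diagonal_steps_eq_prod, Nat.card_congr (quadrantWalksEquiv _ _ n),
    Nat.card_prod, Meander.card_eq, sq]
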